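/- Let A = (Q, Σ, Δ, q_0, Q_f) be an n-store automaton and let Â = (2^Q, Σ, Δ̂, {q_0}, 2^{Q_f}) be the associated level-n nested store automaton, where for n = 1, Δ̂ contains ({q_1,…,q_m}, a, Q′) whenever each q_i has a transition (q_i, a, Q_i) ∈ Δ and Q′ = Q_1 ∪ … ∪ Q_m, and for n > 1, Δ̂ contains ({q_1,…,q_m}, B̂, Q′) whenever each q_i has a transition (q_i, B_i, Q_i) ∈ Δ, Q′ = Q_1 ∪ … ∪ Q_m, and B = B_1 ∩ … ∩ B_m (with B̂ obtained recursively). Then for any word w of stores, the run {q_1,…,q_m} —w→ Q′ exists in A if and only if the run {q_1,…,q_m} —w→ Q′ exists in Â. -/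
import Mathlib


namespace HOPDS

/-- `St α k` is the type of order-`(k+1)` stores over the alphabet `α`
(so an `n`-store, for `n ≥ 1`, is a term of type `St α (n-1)`).
An order-1 store is a finite word; an order-`(k+2)` store is a nonempty
list (encoded as head plus tail of the list) of order-`(k+1)` stores. -/
def St (α : Type) : ℕ → Type
  | 0 => List α
  | k + 1 => St α k × List (St α k)

/-- the `top₁` symbol of a store (`none` on an empty order-1 store) -/
def St.top1 {α : Type} : (k : ℕ) → St α k → Option α
  | 0, w => List.head? w
  | k + 1, s => St.top1 k s.1

/-- Stack operations: `pushw w` is `push_w` (with `pop₁ = push_ε`);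
`push l` / `pop l` are `push_l` / `pop_l`. -/
inductive Op (α : Type) where
  | pushw : List α → Op α
  | push : ℕ → Op α
  | pop : ℕ → Op α

/-- `Op.Valid n o` says that `o` belongs to `O_n`. -/
def Op.Valid {α : Type} (n : ℕ) : Op α → Prop
  | .pushw _ => True
  | .push l => 2 ≤ l ∧ l ≤ n
  | .pop l => 2 ≤ l ∧ l ≤ n

/-- partial application of a stack operation to an order-`(k+1)` store -/
def Op.apply {α : Type} : (k : ℕ) → Op α → St α k → Option (St α k)
  | 0, .pushw w, s =>
      match (s : List α) with
      | [] => none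
      | _ :: t => some ((w ++ t : List α))
  | 0, .push _, _ => none
  | 0, .pop _, _ => none
  | k + 1, .pushw w, s =>
      (Op.apply k (.pushw w) s.1).map fun t' => ((t', s.2) : St α (k+1))
  | k + 1, .push l, s =>
      if l = k + 2 then some ((s.1, s.1 :: s.2) : St α (k+1))
      else (Op.apply k (.push l) s.1).map fun t' => ((t', s.2) : St α (k+1))
  | k + 1, .pop l, s =>
      if l = k + 2 then
        match s.2 with
        | [] => none
        | r :: rs => some ((r, rs) : St α (k+1))
      else (Op.apply k (.pop l) s.1).map fun t' => ((t', s.2) : St α (k+1))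

/-- configurations of an order-`(k+1)` pushdown system -/
abbrev PConf (P α : Type) (k : ℕ) := P × St α k

/-- one transition `⟨p,γ⟩ ↪ ⟨p',γ'⟩` of an order-`(k+1)` PDS with commands `D` -/
def PStep {P α : Type} {k : ℕ} (D : Set (P × α × Op α × P)) (c c' : PConf P α k) : Prop :=
  ∃ a o, (c.1, a, o, c'.1) ∈ D ∧ St.top1 k c.2 = some a ∧ Op.apply k o c.2 = some c'.2

def PPreStar {P α : Type} {k : ℕ} (D : Set (P × α × Op α × P)) (C : Set (PConf P α k)) :
    Set (PConf P α k) :=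
  {c | ∃ c' ∈ C, Relation.ReflTransGen (PStep D) c c'}

def PPrePlus {P α : Type} {k : ℕ} (D : Set (P × α × Op α × P)) (C : Set (PConf P α k)) :
    Set (PConf P α k) :=
  {c | ∃ c' ∈ C, Relation.TransGen (PStep D) c c'}

/-- configurations of an order-`(k+1)` alternating PDS; `none` is the undefined store `∇` -/
abbrev AConf (P α : Type) (k : ℕ) := P × Option (St α k)

/-- `⟨p,γ⟩ ↪ C` for an APDS with commands `D ⊆ P × Σ × 2^(O_n × P)` -/
def AStep {P α : Type} {k : ℕ} (D : Set (P × α × Set (Op α × P)))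
    (c : AConf P α k) (C : Set (AConf P α k)) : Prop :=
  ∃ p γ a OP, c = (p, some γ) ∧ (p, a, OP) ∈ D ∧ St.top1 k γ = some a ∧
    C = {c' | ∃ o p' δ, (o, p') ∈ OP ∧ Op.apply k o γ = some δ ∧ c' = (p', some δ)}
      ∪ {c' | (∃ o p', (o, p') ∈ OP ∧ Op.apply k o γ = none) ∧ c' = (p, none)}

/-- extension of `↪` to sets of configurations -/
def ASetStep {P α : Type} {k : ℕ} (D : Set (P × α × Set (Op α × P)))
    (X Y : Set (AConf P α k)) : Prop :=
  ∃ c C C', AStep D c C ∧ c ∉ C' ∧ X = insert c C' ∧ Y = C' ∪ C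

/-- `Pre*(C_Init)` for an APDS: the configurations `c` with `{c} ↪* C ⊆ C_Init` -/
def APreStar {P α : Type} {k : ℕ} (D : Set (P × α × Set (Op α × P)))
    (CI : Set (AConf P α k)) : Set (AConf P α k) :=
  {c | ∃ C, Relation.ReflTransGen (ASetStep D) {c} C ∧ C ⊆ CI}

/-- one alternating step: choose one transition from every state of `S` and union the targets -/
def setStep {L : Type} (tr : ℕ → L → Set ℕ → Prop) (l : L) (S S' : Set ℕ) : Prop :=
  ∃ f : ℕ → Set ℕ, (∀ q ∈ S, tr q l (f q)) ∧ S' = ⋃ q ∈ S, f q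

/-- alternating run over a word of labels -/
inductive listRun {L : Type} (tr : ℕ → L → Set ℕ → Prop) : List L → Set ℕ → Set ℕ → Prop
  | nil (S : Set ℕ) : listRun tr [] S S
  | cons {l : L} {ls : List L} {S S1 S2 : Set ℕ} :
      setStep tr l S S1 → listRun tr ls S1 S2 → listRun tr (l :: ls) S S2

/-- Alternating order-`(k+1)` store automata: states drawn from `ℕ`, a finite list of
transitions labelled (at higher orders) by order-`k` store automata, an initial state,
and a finite list of final states. -/
def SA (α : Type) : ℕ → Type
  | 0 => List (ℕ × α × List ℕ) × ℕ × List ℕ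
  | k + 1 => List (ℕ × SA α k × List ℕ) × ℕ × List ℕ

/-- the initial state of a store automaton -/
def SA.init {α : Type} : (k : ℕ) → SA α k → ℕ
  | 0, A => A.2.1
  | _ + 1, A => A.2.1

/-- acceptance of an order-`(k+1)` store from state `q`: an alternating run over the
word of (sub)stores ending in a set of final states, where at each step every label
must accept the store being read -/
def SA.accFrom {α : Type} : (k : ℕ) → SA α k → ℕ → St α k → Prop
  | 0, A, q, w =>
      ∃ S, listRun (fun q' a T => ∃ L, (q', a, L) ∈ A.1 ∧ T = {x | x ∈ L})
          (w : List α) {q} S ∧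
        S ⊆ {x | x ∈ A.2.2}
  | k + 1, A, q, s =>
      ∃ S,
        listRun
          (fun q' γ T => ∃ B L, (q', B, L) ∈ A.1 ∧ SA.accFrom k B (SA.init k B) γ ∧
            T = {x | x ∈ L})
          (s.1 :: s.2) {q} S ∧
        S ⊆ {x | x ∈ A.2.2}

/-- acceptance from the initial state -/
def SA.acc {α : Type} {k : ℕ} (A : SA α k) (s : St α k) : Prop :=
  SA.accFrom k A (SA.init k A) s

/-- size of a store automaton (transitions counted recursively) -/
def SA.size {α : Type} : (k : ℕ) → SA α k → ℕ
  | 0, A => A.1.length + A.2.2.length + 1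
  | k + 1, A =>
      (A.1.map fun t => SA.size k t.2.1 + t.2.2.length + 1).sum + A.2.2.length + 1

/-- An order-`(k+1)`-store multi-automaton: a shared store automaton together with
one initial state per control state, and possible `∇`-transitions (`nabla p` holds iff
there is a transition `q^p —∇→ {q^ε_f}`). -/
structure MSA (α P : Type) (k : ℕ) where
  core : SA α k
  inits : P → ℕ
  nabla : Set P

/-- the set of configurations accepted by a multi-automaton -/
def MSA.Lang {α P : Type} {k : ℕ} (M : MSA α P k) : Set (AConf P α k) :=
  {c | (∃ s, c.2 = some s ∧ SA.accFrom k M.core (M.inits c.1) s) ∨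
       (c.2 = none ∧ c.1 ∈ M.nabla)}

def MSA.size {α P : Type} {k : ℕ} (M : MSA α P k) : ℕ := SA.size k M.core

/-- regular sets of configurations: those recognised by a store multi-automaton -/
def Regular {α P : Type} {k : ℕ} (C : Set (AConf P α k)) : Prop :=
  ∃ M : MSA α P k, M.Lang = C

/-- tower of exponentials: `tower n x = exp_n(x)` -/
def tower : ℕ → ℕ → ℕ
  | 0, x => x
  | n + 1, x => 2 ^ tower n x

/-- Büchi acceptance: an infinite run visiting accepting control states infinitely often -/
def BuchiAcc {P α : Type} {k : ℕ} (D : Set (P × α × Op α × P)) (F : Set P)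
    (c : PConf P α k) : Prop :=
  ∃ r : ℕ → PConf P α k,
    r 0 = c ∧ (∀ i, PStep D (r i) (r (i + 1))) ∧ ∀ i, ∃ j, i ≤ j ∧ (r j).1 ∈ F

/-- the store `[^n a]^n` (each level a singleton) -/
def unitSt {α : Type} (a : α) : (k : ℕ) → St α k
  | 0 => [a]
  | k + 1 => ((unitSt a k, []) : St α (k+1))

/-- Eloise's attractor for a reachability game with step relation `step`,
Eloise-owned configurations `E` and target set `R`:  `Attr_E(R) = ⋃ᵢ Attrⁱ_E(R)`. -/
def AttrE {C : Type} (step : C → C → Prop) (E : Set C) (R : Set C) : Set C :=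
  ⋃ i,
    (fun X => X ∪ {c | c ∈ E ∧ ∃ c', step c c' ∧ c' ∈ X}
                ∪ {c | c ∉ E ∧ ∀ c', step c c' → c' ∈ X})^[i] R

end HOPDS

namespace HOPDS

/-- Nondeterministic level-`(k+1)` nested store automata (Bouajjani–Meyer), with states
ranging over finite sets of the states of a corresponding alternating automaton:
a finite list of transitions labelled (at higher levels) by level-`k` nested automata,
an initial state and a finite list of final states. -/
def NSA (α : Type) : ℕ → Type
  | 0 => List (Finset ℕ × α × Finset ℕ) × Finset ℕ × List (Finset ℕ)
  | k + 1 => List (Finset ℕ × NSA α k × Finset ℕ) × Finset ℕ × List (Finset ℕ)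

def NSA.init {α : Type} : (k : ℕ) → NSA α k → Finset ℕ
  | 0, N => N.2.1
  | _ + 1, N => N.2.1

/-- nondeterministic path through a transition relation, reading a word of labels -/
inductive npath {τ L : Type} (tr : τ → L → τ → Prop) : List L → τ → τ → Prop
  | nil (S : τ) : npath tr [] S S
  | cons {l : L} {ls : List L} {S S1 S2 : τ} :
      tr S l S1 → npath tr ls S1 S2 → npath tr (l :: ls) S S2

/-- acceptance of an order-`(k+1)` store by a nested store automaton from a state -/
def NSA.accFrom {α : Type} : (k : ℕ) → NSA α k → Finset ℕ → St α k → Prop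
  | 0, N, S, w =>
      ∃ S', npath (fun S1 a S2 => (S1, a, S2) ∈ N.1) (w : List α) S S' ∧ S' ∈ N.2.2
  | k + 1, N, S, s =>
      ∃ S', npath
          (fun S1 γ S2 => ∃ B, (S1, B, S2) ∈ N.1 ∧ NSA.accFrom k B (NSA.init k B) γ)
          (s.1 :: s.2) S S' ∧ S' ∈ N.2.2

def NSA.acc {α : Type} {k : ℕ} (N : NSA α k) (s : St α k) : Prop :=
  NSA.accFrom k N (NSA.init k N) s

/-- the labels read by a level-`(k+1)` automaton: characters at level 1, order-`k`
stores at higher levels -/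
def Lab (α : Type) : ℕ → Type
  | 0 => α
  | k + 1 => St α k

/-- the one-state transition predicate of an alternating store automaton (a transition
exists and its label accepts the store being read) -/
def saTr {α : Type} : (k : ℕ) → SA α k → ℕ → Lab α k → Set ℕ → Prop
  | 0, A, q, a, T => ∃ L, (q, (a : α), L) ∈ A.1 ∧ T = {x | x ∈ L}
  | k + 1, A, q, γ, T =>
      ∃ B L, (q, B, L) ∈ A.1 ∧ SA.accFrom k B (SA.init k B) (γ : St α k) ∧
        T = {x | x ∈ L}

/-- the one-step transition predicate of a nested store automaton -/
def nsaTr {α : Type} : (k : ℕ) → NSA α k → Finset ℕ → Lab α k → Finset ℕ → Prop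
  | 0, N, S, a, S' => (S, (a : α), S') ∈ N.1
  | k + 1, N, S, γ, S' => ∃ B, (S, B, S') ∈ N.1 ∧ NSA.accFrom k B (NSA.init k B) (γ : St α k)

/-- `IsHat k A N` : `N` is (a realisation of) the level-`(k+1)` nested store automaton `Â`
associated with the alternating automaton `A`: its states are the finite sets of states
of `A`, its initial state is `{q₀}`, its final states are the subsets of `Q_f`, and its
transitions are exactly those obtained by choosing one `A`-transition from each state of
the source set, unioning the targets, and labelling with (a hat of) an automaton for the
intersection `B₁ ∩ … ∩ B_m` of the chosen labels. -/
def IsHat {α : Type} : (k : ℕ) → SA α k → NSA α k → Prop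
  | 0, A, N =>
      N.2.1 = {A.2.1} ∧
      (∀ S : Finset ℕ, S ∈ N.2.2 ↔ ∀ q ∈ S, q ∈ A.2.2) ∧
      (∀ (S : Finset ℕ) (a : α) (S' : Finset ℕ),
        (S, a, S') ∈ N.1 ↔
          ∃ f : ℕ → Finset ℕ,
            (∀ q ∈ S, ∃ L, (q, a, L) ∈ A.1 ∧ f q = L.toFinset) ∧
            S' = S.biUnion f)
  | k + 1, A, N =>
      N.2.1 = {A.2.1} ∧
      (∀ S : Finset ℕ, S ∈ N.2.2 ↔ ∀ q ∈ S, q ∈ A.2.2) ∧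
      (∀ (S : Finset ℕ) (Bh : NSA α k) (S' : Finset ℕ),
        (S, Bh, S') ∈ N.1 →
          ∃ f : ℕ → SA α k × Finset ℕ,
            (∀ q ∈ S, ∃ L, (q, (f q).1, L) ∈ A.1 ∧ (f q).2 = L.toFinset) ∧
            S' = S.biUnion (fun q => (f q).2) ∧
            ∃ B : SA α k,
              (∀ γ, SA.acc B γ ↔ ∀ q ∈ S, SA.acc (f q).1 γ) ∧ IsHat k B Bh) ∧
      (∀ (S : Finset ℕ) (f : ℕ → SA α k × Finset ℕ),
        (∀ q ∈ S, ∃ L, (q, (f q).1, L) ∈ A.1 ∧ (f q).2 = L.toFinset) →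
          ∃ (B : SA α k) (Bh : NSA α k),
            (∀ γ, SA.acc B γ ↔ ∀ q ∈ S, SA.acc (f q).1 γ) ∧ IsHat k B Bh ∧
            (S, Bh, S.biUnion fun q => (f q).2) ∈ N.1)

end HOPDS

namespace HOPDS

section Aux

variable {α : Type}

/-- Forward direction: every alternating run starting from (the coercion of) a finite
set ends in (the coercion of) a finite set, and the corresponding nondeterministic
path exists in the hat automaton. -/
def FwdP (k : ℕ) (A : SA α k) (N : NSA α k) : Prop :=
  ∀ (w : List (Lab α k)) (S : Finset ℕ) (X : Set ℕ),
    listRun (saTr k A) w (↑S) X → ∃ Q' : Finset ℕ, X = ↑Q' ∧ npath (nsaTr k N) w S Q'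

/-- Backward direction. -/
def BwdP (k : ℕ) (A : SA α k) (N : NSA α k) : Prop :=
  ∀ (w : List (Lab α k)) (S Q' : Finset ℕ),
    npath (nsaTr k N) w S Q' → listRun (saTr k A) w (↑S) (↑Q')

/-- a junk store automaton, used as default value in choice constructions -/
def SA.junk (α : Type) : (k : ℕ) → SA α k
  | 0 => ([], 0, [])
  | _ + 1 => ([], 0, [])

lemma acc_equiv_of_fwd_bwd (k : ℕ) (A : SA α k) (N : NSA α k)
    (h : IsHat k A N) (hf : FwdP k A N) (hb : BwdP k A N) (s : St α k) :
    SA.acc A s ↔ NSA.acc N s := by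
  cases k with
  | zero =>
    obtain ⟨hinit, hfin, -⟩ := h
    constructor
    · rintro ⟨S, hr, hsub⟩
      rw [← Finset.coe_singleton] at hr
      obtain ⟨Q', hQ, hp⟩ := hf (s : List α) {A.2.1} S hr
      refine ⟨Q', ?_, ?_⟩
      · show npath (nsaTr 0 N) (s : List α) N.2.1 Q'
        rw [hinit]; exact hp
      · rw [hfin]; intro q hq
        have : q ∈ S := by rw [hQ]; exact_mod_cast hq
        exact hsub this
    · rintro ⟨Q', hp, hfinal⟩
      have hp' : npath (nsaTr 0 N) (s : List α) N.2.1 Q' := hp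
      rw [hinit] at hp'
      have hr := hb (s : List α) {A.2.1} Q' hp'
      rw [Finset.coe_singleton] at hr
      refine ⟨(↑Q' : Set ℕ), hr, ?_⟩
      intro q hq
      exact (hfin Q').1 hfinal q (by exact_mod_cast hq)
  | succ k =>
    obtain ⟨hinit, hfin, -, -⟩ := h
    constructor
    · rintro ⟨S, hr, hsub⟩
      rw [← Finset.coe_singleton] at hr
      obtain ⟨Q', hQ, hp⟩ := hf (s.1 :: s.2) {A.2.1} S hr
      refine ⟨Q', ?_, ?_⟩
      · show npath (nsaTr (k+1) N) (s.1 :: s.2) N.2.1 Q'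
        rw [hinit]; exact hp
      · rw [hfin]; intro q hq
        have : q ∈ S := by rw [hQ]; exact_mod_cast hq
        exact hsub this
    · rintro ⟨Q', hp, hfinal⟩
      have hp' : npath (nsaTr (k+1) N) (s.1 :: s.2) N.2.1 Q' := hp
      rw [hinit] at hp'
      have hr := hb (s.1 :: s.2) {A.2.1} Q' hp'
      rw [Finset.coe_singleton] at hr
      refine ⟨(↑Q' : Set ℕ), hr, ?_⟩
      intro q hq
      exact (hfin Q').1 hfinal q (by exact_mod_cast hq)

lemma main_equiv (k : ℕ) :
    ∀ (A : SA α k) (N : NSA α k), IsHat k A N → FwdP k A N ∧ BwdP k A N := by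
  induction k with
  | zero =>
    intro A N h
    obtain ⟨hinit, hfin, htr⟩ := h
    constructor
    · intro w
      induction w with
      | nil =>
        intro S X hr
        cases hr
        exact ⟨S, rfl, npath.nil S⟩
      | cons a ls ih =>
        intro S X hr
        cases hr with
        | cons hstep hrest =>
          rename_i S1
          obtain ⟨f, hf, hS1⟩ := hstep
          classical
          set g : ℕ → Finset ℕ := fun q =>
            if hq : ∃ L : List ℕ, (q, a, L) ∈ A.1 ∧ f q = {x | x ∈ L}
            then hq.choose.toFinset else ∅ with hg
          have hgood : ∀ q ∈ S, (∃ L, (q, a, L) ∈ A.1 ∧ g q = L.toFinset) ∧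
              f q = ↑(g q) := by
            intro q hq
            have hq' : ∃ L : List ℕ, (q, a, L) ∈ A.1 ∧ f q = {x | x ∈ L} :=
              hf q (by exact_mod_cast hq)
            obtain ⟨hmem, hfq⟩ := hq'.choose_spec
            have hgq : g q = hq'.choose.toFinset := dif_pos hq'
            refine ⟨⟨hq'.choose, hmem, hgq⟩, ?_⟩
            rw [hgq]
            exact hfq.trans (by ext x; simp)
          have hS1' : S1 = ↑(S.biUnion g) := by
            rw [hS1]; ext x
            simp only [Set.mem_iUnion, Finset.coe_biUnion, Finset.mem_coe,
              Finset.mem_biUnion]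
            constructor
            · rintro ⟨q, hq, hx⟩
              have hq' : q ∈ S := by exact_mod_cast hq
              refine ⟨q, hq', ?_⟩
              have := (hgood q hq').2
              rw [this] at hx; exact_mod_cast hx
            · rintro ⟨q, hq, hx⟩
              refine ⟨q, by exact_mod_cast hq, ?_⟩
              rw [(hgood q hq).2]; exact_mod_cast hx
          rw [hS1'] at hrest
          obtain ⟨Q', hQ, hp⟩ := ih (S.biUnion g) X hrest
          refine ⟨Q', hQ, npath.cons ?_ hp⟩
          exact (htr S a (S.biUnion g)).2 ⟨g, fun q hq => (hgood q hq).1, rfl⟩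
    · intro w
      induction w with
      | nil =>
        intro S Q' hp
        cases hp
        exact listRun.nil _
      | cons a ls ih =>
        intro S Q' hp
        cases hp with
        | cons hstep hrest =>
          rename_i S1
          obtain ⟨g, hgood, hS1⟩ := (htr S a S1).1 hstep
          refine listRun.cons (S1 := ↑S1) ⟨fun q => ↑(g q), ?_, ?_⟩ (ih S1 Q' hrest)
          · intro q hq
            have hq' : q ∈ S := by exact_mod_cast hq
            obtain ⟨L, hmem, hgq⟩ := hgood q hq'
            refine ⟨L, hmem, ?_⟩
            show (↑(g q) : Set ℕ) = {x | x ∈ L}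
            rw [hgq]; ext x; simp
          · rw [hS1]; ext x; simp
  | succ k ih =>
    intro A N h
    obtain ⟨hinit, hfin, hmem, hexists⟩ := h
    constructor
    · intro w
      induction w with
      | nil =>
        intro S X hr
        cases hr
        exact ⟨S, rfl, npath.nil S⟩
      | cons γ ls ihw =>
        intro S X hr
        cases hr with
        | cons hstep hrest =>
          rename_i S1
          obtain ⟨f, hf, hS1⟩ := hstep
          classical
          set g : ℕ → SA α k × Finset ℕ := fun q =>
            if hq : ∃ (B : SA α k) (L : List ℕ), (q, B, L) ∈ A.1 ∧
                SA.accFrom k B (SA.init k B) γ ∧ f q = {x | x ∈ L}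
            then (hq.choose, hq.choose_spec.choose.toFinset) else (SA.junk α k, ∅)
            with hg
          have hgood : ∀ q ∈ S,
              (∃ L, (q, (g q).1, L) ∈ A.1 ∧ (g q).2 = L.toFinset) ∧
              SA.acc (g q).1 γ ∧ f q = ↑((g q).2) := by
            intro q hq
            have hq' : ∃ (B : SA α k) (L : List ℕ), (q, B, L) ∈ A.1 ∧
                SA.accFrom k B (SA.init k B) γ ∧ f q = {x | x ∈ L} :=
              hf q (by exact_mod_cast hq)
            obtain ⟨hm, hacc, hfq⟩ := hq'.choose_spec.choose_spec
            have hgq : g q = (hq'.choose, hq'.choose_spec.choose.toFinset) :=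
              dif_pos hq'
            refine ⟨⟨hq'.choose_spec.choose, by rw [hgq]; exact ⟨hm, rfl⟩⟩, ?_, ?_⟩
            · rw [hgq]; exact hacc
            · rw [hgq]
              exact hfq.trans (by ext x; simp)
          obtain ⟨B, Bh, hBacc, hBhat, hmemN⟩ :=
            hexists S g (fun q hq => (hgood q hq).1)
          have hS1' : S1 = ↑(S.biUnion fun q => (g q).2) := by
            rw [hS1]; ext x
            simp only [Set.mem_iUnion, Finset.coe_biUnion, Finset.mem_coe,
              Finset.mem_biUnion]
            constructor
            · rintro ⟨q, hq, hx⟩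
              have hq' : q ∈ S := by exact_mod_cast hq
              refine ⟨q, hq', ?_⟩
              have := (hgood q hq').2.2
              rw [this] at hx; exact_mod_cast hx
            · rintro ⟨q, hq, hx⟩
              refine ⟨q, by exact_mod_cast hq, ?_⟩
              rw [(hgood q hq).2.2]; exact_mod_cast hx
          rw [hS1'] at hrest
          obtain ⟨Q', hQ, hp⟩ := ihw (S.biUnion fun q => (g q).2) X hrest
          have hBaccγ : SA.acc B γ := (hBacc γ).2 (fun q hq => (hgood q hq).2.1)
          have hBh : NSA.acc Bh γ := by
            obtain ⟨hfB, hbB⟩ := ih B Bh hBhat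
            exact (acc_equiv_of_fwd_bwd k B Bh hBhat hfB hbB γ).1 hBaccγ
          exact ⟨Q', hQ, npath.cons ⟨Bh, hmemN, hBh⟩ hp⟩
    · intro w
      induction w with
      | nil =>
        intro S Q' hp
        cases hp
        exact listRun.nil _
      | cons γ ls ihw =>
        intro S Q' hp
        cases hp with
        | cons hstep hrest =>
          rename_i S1
          obtain ⟨Bh, hmemN, hBh⟩ := hstep
          obtain ⟨f, hgood, hS1, B, hBacc, hBhat⟩ := hmem S Bh S1 hmemN
          have hBaccγ : SA.acc B γ := by
            obtain ⟨hfB, hbB⟩ := ih B Bh hBhat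
            exact (acc_equiv_of_fwd_bwd k B Bh hBhat hfB hbB γ).2 hBh
          have haccq : ∀ q ∈ S, SA.acc (f q).1 γ := (hBacc γ).1 hBaccγ
          refine listRun.cons (S1 := ↑S1)
            ⟨fun q => ↑((f q).2), ?_, ?_⟩ (ihw S1 Q' hrest)
          · intro q hq
            have hq' : q ∈ S := by exact_mod_cast hq
            obtain ⟨L, hm, hfq⟩ := hgood q hq'
            refine ⟨(f q).1, L, hm, haccq q hq', ?_⟩
            show (↑((f q).2) : Set ℕ) = {x | x ∈ L}
            rw [hfq]; ext x; simp
          · rw [hS1]; ext x; simp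

end Aux

/-- Let `A` be an `n`-store automaton (here `n = k + 1`) and `Â` the
associated level-`n` nested store automaton (any automaton satisfying `IsHat`, i.e. built
by the subset construction with intersection automata as labels, recursively).  Then for
any word `w` of stores (characters when `n = 1`), the alternating run
`{q₁,…,q_m} —w→ Q'` exists in `A` iff the nondeterministic run `{q₁,…,q_m} —w→ Q'`
exists in `Â`. -/
theorem hat_automaton_run_equivalence
    (α : Type) (k : ℕ) (A : SA α k) (N : NSA α k) (h : IsHat k A N)
    (w : List (Lab α k)) (S Q' : Finset ℕ) :
    listRun (saTr k A) w (↑S) (↑Q') ↔ npath (nsaTr k N) w S Q' := by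
  obtain ⟨hf, hb⟩ := main_equiv k A N h
  constructor
  · intro hr
    obtain ⟨Q'', hQ, hp⟩ := hf w S _ hr
    have : Q' = Q'' := Finset.coe_injective hQ
    rwa [this]
  · exact hb w S Q'

end HOPDS
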